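/- For every nonnegative integer n and every nonnegative integer s, S_n^{(r,k)}(x|a_1,…,a_r) = Σ_{m=0}^n ( C(n,m) Σ_{l=0}^{n−m} (C(n−m,l)/C(l+s,l)) S_2(l+s,s) S_{n−m−l}^{(r,k)}(a_1,…,a_r) ) 𝔅_m^{(s)}(x), as an identity of polynomials in x. -/

import Mathlib

/-!
Let `U(t) = ((e^t - 1)/t)^s`. The Stirling expansion of `(e^t - 1)^s` gives
`U(t) = ∑_l S2(l+s,s)/C(l+s,l) · t^l/l!`, and the definition of `𝔅^{(s)}` says
`e^{xt} = U(t) · ∑_m 𝔅_m^{(s)}(x) t^m/m!`. Specialising the generating function of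
`S_n^{(r,k)}(x)` at `x = 0` shows that it is `(∑_n S_n^{(r,k)} t^n/n!) · e^{xt}`, so it is the product
of three exponential generating functions; two binomial convolutions give the coefficients.
-/
open PowerSeries Finset

/-- The formal power series `e^{c·t}` over a commutative `ℚ`-algebra `R`. -/
noncomputable def expS {R : Type*} [CommRing R] [Algebra ℚ R] (c : R) : PowerSeries R :=
  PowerSeries.rescale c (PowerSeries.exp R)

/-- The formal power series `Li_k(1 - e^{-t})` over `ℂ`, where
`Li_k(z) = ∑_{m ≥ 1} z^m / m^k` is the `k`-th polylogarithm.  Since `1 - e^{-t}`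
has order `1`, the coefficient of `t^n` only involves the terms with `1 ≤ m ≤ n`. -/
noncomputable def Lik (k : ℤ) : PowerSeries ℂ :=
  PowerSeries.mk fun n => ∑ m ∈ Finset.Icc 1 n,
    ((m : ℂ) ^ k)⁻¹ * PowerSeries.coeff n ((1 - expS (-1 : ℂ)) ^ m)

/-- The exponential generating function `∑_n p n · t^n / n!` of a sequence of
complex polynomials. -/
noncomputable def egf (p : ℕ → Polynomial ℂ) : PowerSeries (Polynomial ℂ) :=
  PowerSeries.mk fun n => ((n.factorial : ℂ))⁻¹ • p n

section ExpS

variable {R S : Type*} [CommRing R] [Algebra ℚ R] [CommRing S] [Algebra ℚ S]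

theorem map_expS (φ : R →+* S) (c : R) : PowerSeries.map φ (expS c) = expS (φ c) := by
  ext n : 1
  simp [expS, coeff_map, coeff_rescale, coeff_exp]

theorem expS_zero : expS (0 : R) = 1 := by
  rw [expS, rescale_zero, RingHom.comp_apply, constantCoeff_exp, map_one]

theorem expS_one : expS (1 : R) = exp R := by
  rw [expS, rescale_one, RingHom.id_apply]

theorem coeff_one_expS (c : R) : coeff 1 (expS c) = c := by
  simp [expS, coeff_rescale, coeff_exp]

theorem expS_sub_one_ne_zero {c : R} (hc : c ≠ 0) : expS c - 1 ≠ 0 := by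
  intro h
  exact hc (by simpa [coeff_one_expS, coeff_one] using congrArg (coeff 1) h)

end ExpS

theorem coeff_egf (p : ℕ → Polynomial ℂ) (n : ℕ) : coeff n (egf p) = (n.factorial : ℂ)⁻¹ • p n :=
  coeff_mk _ _

theorem egf_injective : Function.Injective egf := by
  intro p q h
  funext n
  have hn : (n.factorial : ℂ)⁻¹ ≠ 0 := inv_ne_zero (Nat.cast_ne_zero.mpr n.factorial_ne_zero)
  simpa [coeff_egf, smul_right_inj hn] using congrArg (coeff n) h

theorem map_egf (φ : Polynomial ℂ →ₐ[ℂ] Polynomial ℂ) (p : ℕ → Polynomial ℂ) :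
    PowerSeries.map (φ : Polynomial ℂ →+* Polynomial ℂ) (egf p) = egf (φ ∘ p) := by
  ext n : 1
  simp [coeff_map, coeff_egf]

theorem egf_mul (p q : ℕ → Polynomial ℂ) :
    egf p * egf q
      = egf fun n => ∑ m ∈ range (n + 1), (n.choose m : ℂ) • (p m * q (n - m)) := by
  ext n : 1
  rw [coeff_mul, Finset.Nat.sum_antidiagonal_eq_sum_range_succ_mk, coeff_egf, smul_sum]
  refine Finset.sum_congr rfl fun m hm => ?_
  have hmn : m ≤ n := Nat.lt_succ_iff.mp (mem_range.mp hm)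
  rw [coeff_egf, coeff_egf, smul_mul_smul_comm, smul_smul, Nat.cast_choose ℂ hmn]
  congr 1
  have := n.factorial_ne_zero
  field_simp

theorem map_algHom_map_C {R A : Type*} [CommRing R] [CommRing A] [Algebra R A]
    (φ : Polynomial R →ₐ[R] A) (f : PowerSeries R) :
    PowerSeries.map (φ : Polynomial R →+* A) (PowerSeries.map Polynomial.C f)
      = PowerSeries.map (algebraMap R A) f := by
  ext n : 1
  simpa [coeff_map] using φ.commutes (coeff n f)

theorem aeval_zero_eq_C_eval_zero {R : Type*} [CommSemiring R] (p : Polynomial R) :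
    Polynomial.aeval (0 : Polynomial R) p = Polynomial.C (p.eval 0) := by
  rw [← Polynomial.coeff_zero_eq_aeval_zero', Polynomial.coeff_zero_eq_eval_zero]
  rfl

theorem X_dvd_expS_sub_one {R : Type*} [CommRing R] [Algebra ℚ R] (c : R) :
    (X : PowerSeries R) ∣ expS c - 1 := by
  rw [X_dvd_iff, map_sub, ← coeff_zero_eq_constantCoeff_apply]
  simp [expS, coeff_rescale, coeff_exp]

theorem expS_one_sub_one_pow_eq_X_pow_mul_egf (s : ℕ) (T : ℕ → ℂ)
    (hT : (exp ℂ - 1) ^ s = (s.factorial : ℂ) • PowerSeries.mk fun l => T l / (l.factorial : ℂ)) :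
    (expS (1 : Polynomial ℂ) - 1) ^ s
      = X ^ s * egf fun l => Polynomial.C (T (l + s) / ((l + s).choose l : ℂ)) := by
  ext m : 1
  rw [coeff_X_pow_mul']
  split_ifs with hsm
  · obtain ⟨l, rfl⟩ := Nat.exists_eq_add_of_le' hsm
    have hmap := congrArg (PowerSeries.map (Polynomial.C : ℂ →+* Polynomial ℂ)) hT
    rw [map_pow, map_sub, map_one, ← expS_one, map_expS, map_one] at hmap
    rw [hmap, Nat.add_sub_cancel, coeff_egf, coeff_map, coeff_smul, coeff_mk, smul_eq_mul,
      Polynomial.smul_C, Nat.cast_choose ℂ (Nat.le_add_right l s), Nat.add_sub_cancel_left]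
    congr 1
    have := l.factorial_ne_zero
    rw [smul_eq_mul]
    field_simp
  · obtain ⟨g, hg⟩ := X_dvd_expS_sub_one (1 : Polynomial ℂ)
    rw [hg, mul_pow, coeff_X_pow_mul', if_neg hsm]

theorem prod_expS_sub_one_mul_one_sub_expS_ne_zero {R ι : Type*} [CommRing R] [IsDomain R]
    [Algebra ℚ R] [Fintype ι] {c : ι → R} (hc : ∀ j, c j ≠ 0) :
    (∏ j, (expS (c j) - 1)) * (1 - expS (-1 : R)) ≠ 0 := by
  refine mul_ne_zero (prod_ne_zero_iff.mpr fun j _ => expS_sub_one_ne_zero (hc j)) ?_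
  rw [← neg_sub]
  exact neg_ne_zero.mpr (expS_sub_one_ne_zero (neg_ne_zero.mpr one_ne_zero))

theorem stmt12_general (r : ℕ) (k : ℤ) (a : Fin r → ℂ) (ha : ∀ j, a j ≠ 0)
    (s : ℕ) (S Bs : ℕ → Polynomial ℂ) (S2 : ℕ → ℕ → ℂ)
    -- `S n` is the mixed-type polynomial `S_n^{(r,k)}(x|a_1,…,a_r)`:
    (hS : (PowerSeries.X : PowerSeries (Polynomial ℂ)) ^ r
        * PowerSeries.map Polynomial.C (Lik k) * expS Polynomial.X
        = (∏ j, (expS (Polynomial.C (a j)) - 1)) * (1 - expS (-1 : Polynomial ℂ)) * egf S)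
    -- `Bs n` is the Bernoulli polynomial `𝔅_n^{(s)}(x)` of order `s`, defined by
    -- `(t/(e^t-1))^s e^{xt} = ∑_n 𝔅_n^{(s)}(x) t^n/n!`:
    (hBs : (PowerSeries.X : PowerSeries (Polynomial ℂ)) ^ s * expS Polynomial.X
        = (expS (1 : Polynomial ℂ) - 1) ^ s * egf Bs)
    -- `S2 l m` is the Stirling number of the second kind, defined by
    -- `(e^t - 1)^m = m! ∑_{l ≥ m} S2(l,m) t^l / l!`:
    (hS2 : ∀ m, (PowerSeries.exp ℂ - 1) ^ m
        = (m.factorial : ℂ) • PowerSeries.mk (fun l => S2 l m / (l.factorial : ℂ)))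
    (n : ℕ) :
    S n = ∑ m ∈ Finset.range (n + 1),
      Polynomial.C ((n.choose m : ℂ)
          * ∑ l ∈ Finset.range (n - m + 1),
              ((n - m).choose l : ℂ) / ((l + s).choose l : ℂ) * S2 (l + s) s
                * (S (n - m - l)).eval 0)
        * Bs m := by
  set D := (∏ j, (expS (Polynomial.C (a j)) - 1)) * (1 - expS (-1 : Polynomial ℂ))
  set stirling : ℕ → Polynomial ℂ := fun l => Polynomial.C (S2 (l + s) s / ((l + s).choose l : ℂ))
  set ε : Polynomial ℂ →ₐ[ℂ] Polynomial ℂ := Polynomial.aeval 0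
  have hexpX : expS Polynomial.X = egf stirling * egf Bs := by
    refine mul_left_cancel₀ (pow_ne_zero s X_ne_zero) ?_
    rw [hBs, expS_one_sub_one_pow_eq_X_pow_mul_egf s _ (hS2 s), mul_assoc]
  have hS0 : X ^ r * PowerSeries.map Polynomial.C (Lik k) = D * egf (ε ∘ S) := by
    have h := congrArg (PowerSeries.map (ε : Polynomial ℂ →+* Polynomial ℂ)) hS
    simpa [D, ε, map_expS, map_egf, map_algHom_map_C, expS_zero] using h
  have hegf : egf S = egf stirling * egf (ε ∘ S) * egf Bs := by
    refine mul_left_cancel₀ (prod_expS_sub_one_mul_one_sub_expS_ne_zero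
      fun j => Polynomial.C_ne_zero.mpr (ha j)) ?_
    rw [← hS, hS0, hexpX]
    ring
  rw [egf_mul, mul_comm, egf_mul] at hegf
  rw [congrFun (egf_injective hegf) n]
  refine Finset.sum_congr rfl fun m _ => ?_
  simp only [Function.comp_apply, ε, aeval_zero_eq_C_eval_zero, stirling, Polynomial.smul_eq_C_mul, ← Polynomial.C_mul,
    ← map_sum, mul_sum]
  rw [mul_comm (Bs m), ← mul_assoc, ← Polynomial.C_mul, mul_sum]
  congr 3 with l
  ring

theorem stmt12 (r : ℕ) (hr : 0 < r) (k : ℤ) (a : Fin r → ℂ) (ha : ∀ j, a j ≠ 0)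
    (s : ℕ) (S Bs : ℕ → Polynomial ℂ) (S2 : ℕ → ℕ → ℂ)
    -- `S n` is the mixed-type polynomial `S_n^{(r,k)}(x|a_1,…,a_r)`:
    (hS : (PowerSeries.X : PowerSeries (Polynomial ℂ)) ^ r
        * PowerSeries.map Polynomial.C (Lik k) * expS Polynomial.X
        = (∏ j, (expS (Polynomial.C (a j)) - 1)) * (1 - expS (-1 : Polynomial ℂ)) * egf S)
    -- `Bs n` is the Bernoulli polynomial `𝔅_n^{(s)}(x)` of order `s`, defined by
    -- `(t/(e^t-1))^s e^{xt} = ∑_n 𝔅_n^{(s)}(x) t^n/n!`: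
    (hBs : (PowerSeries.X : PowerSeries (Polynomial ℂ)) ^ s * expS Polynomial.X
        = (expS (1 : Polynomial ℂ) - 1) ^ s * egf Bs)
    -- `S2 l m` is the Stirling number of the second kind, defined by
    -- `(e^t - 1)^m = m! ∑_{l ≥ m} S2(l,m) t^l / l!`:
    (hS2 : ∀ m, (PowerSeries.exp ℂ - 1) ^ m
        = (m.factorial : ℂ) • PowerSeries.mk (fun l => S2 l m / (l.factorial : ℂ)))
    (n : ℕ) :
    S n = ∑ m ∈ Finset.range (n + 1),
      Polynomial.C ((n.choose m : ℂ)
          * ∑ l ∈ Finset.range (n - m + 1),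
              ((n - m).choose l : ℂ) / ((l + s).choose l : ℂ) * S2 (l + s) s
                * (S (n - m - l)).eval 0)
        * Bs m :=
  stmt12_general r k a ha s S Bs S2 hS hBs hS2 n
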